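/- Let Q ⊂ ℝ^d be a bounded, convex, open set with Q = −Q, and let Σ_u ⊆ {0, η₁, η₂}, Σ_n ⊆ {0, η₃, −η₃} be subsets of ℝ^d with −Σ_n = Σ_n. Assume û₀(ξ) = 0 for all ξ ∉ ⋃_{η∈Σ_u}(η+Q) and n̂₀(ξ) = 0 for all ξ ∉ ⋃_{η∈Σ_n}(η+Q), and that n̂₀(−ξ) = conj(n̂₀(ξ)) for all ξ. For integers n₁, n₂ ≥ 0 set K_{n₁,n₂} := { Σ_{j=1}^{n₁} a_j + Σ_{j=1}^{n₂} b_j : a_j ∈ Σ_u ∪ (−Σ_u), b_j ∈ Σ_n } when n₁ ≠ 1, K_{1,n₂} := { a + Σ_{j=1}^{n₂} b_j : a ∈ Σ_u, b_j ∈ Σ_n }, and Σₙ⁽¹⁾ := ⋃_{n₁+n₂=n, n₁ odd} K_{n₁,n₂}, Σₙ⁽²⁾ := ⋃_{n₁+n₂=n, n₁ even} K_{n₁,n₂}. Then for every n ≥ 1 and every t ≥ 0: Fₙ(t,ξ) = 0 for all ξ ∉ ⋃_{η∈Σₙ⁽¹⁾}(η + nQ), and Gₙ(t,ξ) = 0 for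 all ξ ∉ ⋃_{η∈Σₙ⁽²⁾}(η + nQ), where nQ := {nξ : ξ ∈ Q}. -/

import Mathlib

open MeasureTheory Set
open scoped Pointwise

noncomputable section

/-- The set `K_{n₁,n₂}` of sums of `n₁` elements of `Σu ∪ (−Σu)` (just `Σu` if `n₁ = 1`)
and `n₂` elements of `Σn`. -/
def Kset {d : ℕ} (Su Sn : Set (EuclideanSpace ℝ (Fin d))) (n₁ n₂ : ℕ) :
    Set (EuclideanSpace ℝ (Fin d)) :=
  if n₁ = 1 then
    {v | ∃ a ∈ Su, ∃ b : Fin n₂ → EuclideanSpace ℝ (Fin d),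
      (∀ j, b j ∈ Sn) ∧ v = a + ∑ j, b j}
  else
    {v | ∃ a : Fin n₁ → EuclideanSpace ℝ (Fin d), ∃ b : Fin n₂ → EuclideanSpace ℝ (Fin d),
      (∀ j, a j ∈ Su ∪ (-Su)) ∧ (∀ j, b j ∈ Sn) ∧ v = ∑ j, a j + ∑ j, b j}

/-- `Σₙ⁽¹⁾`: union of the `K_{n₁,n₂}` with `n₁ + n₂ = n` and `n₁` odd. -/
def SigOdd {d : ℕ} (Su Sn : Set (EuclideanSpace ℝ (Fin d))) (n : ℕ) :
    Set (EuclideanSpace ℝ (Fin d)) :=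
  ⋃ (p : ℕ × ℕ) (_ : p.1 + p.2 = n ∧ Odd p.1), Kset Su Sn p.1 p.2

/-- `Σₙ⁽²⁾`: union of the `K_{n₁,n₂}` with `n₁ + n₂ = n` and `n₁` even. -/
def SigEven {d : ℕ} (Su Sn : Set (EuclideanSpace ℝ (Fin d))) (n : ℕ) :
    Set (EuclideanSpace ℝ (Fin d)) :=
  ⋃ (p : ℕ × ℕ) (_ : p.1 + p.2 = n ∧ Even p.1), Kset Su Sn p.1 p.2

/-- `F` and `G` are the Fourier-side Picard iterates of the reduced Zakharov system with
Fourier-transformed initial data `u₀` (Schrödinger part) and `n₀` (wave part). -/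
def IsPicardIterates {d : ℕ} (u₀ n₀ : EuclideanSpace ℝ (Fin d) → ℂ)
    (F G : ℕ → ℝ → EuclideanSpace ℝ (Fin d) → ℂ) : Prop :=
  (∀ t ξ, F 1 t ξ = Complex.exp (-Complex.I * ((t * ‖ξ‖ ^ 2 : ℝ) : ℂ)) * u₀ ξ) ∧
  (∀ t ξ, G 1 t ξ = Complex.exp (-Complex.I * ((t * ‖ξ‖ : ℝ) : ℂ)) * n₀ ξ) ∧
  (∀ n, 2 ≤ n → ∀ t ξ, F n t ξ =
    -Complex.I * ∑ k ∈ Finset.Ico 1 n,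
      ∫ σ in (0:ℝ)..t,
        Complex.exp (-Complex.I * (((t - σ) * ‖ξ‖ ^ 2 : ℝ) : ℂ)) *
          ∫ η, F k σ η *
            ((G (n - k) σ (ξ - η) + (starRingEnd ℂ) (G (n - k) σ (-(ξ - η)))) / 2)) ∧
  (∀ n, 2 ≤ n → ∀ t ξ, G n t ξ =
    -Complex.I * ∑ k ∈ Finset.Ico 1 n,
      ∫ σ in (0:ℝ)..t,
        Complex.exp (-Complex.I * (((t - σ) * ‖ξ‖ : ℝ) : ℂ)) * ((‖ξ‖ : ℝ) : ℂ) *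
          ∫ η, F k σ η * (starRingEnd ℂ) (F (n - k) σ (η - ξ)))

/-!
Every Picard iterate is a sum of integrals of products `F k (η) · G (n - k) (ξ - η)` (or
`F k (η) · conj F (n - k) (η - ξ)`), so its support lies in the sum of the supports of the two
factors, the reflected factors being handled by `Q = -Q` and `Sn = -Sn`. By strong induction on
`n` it therefore suffices that the regions `Σₙ⁽¹⁾ + n Q` and `Σₙ⁽²⁾ + n Q` are stable under these
sums. For the frequency sets this is bookkeeping of the parity of the number of Schrödinger
frequencies; for the dilates of `Q` it is `k Q + m Q = (k + m) Q`, which holds because `Q` is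
convex.
-/

open Function

section SupportCalculus

variable {E : Type*} [AddCommGroup E]

lemma biUnion_setOf_sub_mem_eq_add (S A : Set E) :
    ⋃ η ∈ S, {ζ | ζ - η ∈ A} = S + A := by
  ext ζ
  simp only [mem_iUnion, mem_ofPred_eq, exists_prop, Set.mem_add]
  constructor
  · rintro ⟨η, hη, hζ⟩
    exact ⟨η, hη, ζ - η, hζ, add_sub_cancel η ζ⟩
  · rintro ⟨η, hη, a, ha, rfl⟩
    exact ⟨η, hη, by simpa using ha⟩

lemma mul_apply_sub_eq_zero_of_notMem_add {M₀ : Type*} [MulZeroClass M₀] [NoZeroDivisors M₀]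
    {f g : E → M₀} {X Y : Set E} (hf : support f ⊆ X) (hg : support g ⊆ Y) {ξ : E}
    (hξ : ξ ∉ X + Y) (η : E) : f η * g (ξ - η) = 0 := by
  by_contra h
  obtain ⟨hfη, hgξη⟩ := mul_ne_zero_iff.mp h
  exact hξ ⟨η, hf hfη, ξ - η, hg hgξη, add_sub_cancel η ξ⟩

lemma support_conj_comp_neg (g : E → ℂ) :
    support (fun x => starRingEnd ℂ (g (-x))) = -support g := by
  ext x
  simp

lemma support_conj_symmetrization_subset (g : E → ℂ) :
    support (fun x => (g x + starRingEnd ℂ (g (-x))) / 2) ⊆ support g ∪ -support g := by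
  rw [← support_conj_comp_neg]
  intro x hx
  by_contra h
  simp_all

end SupportCalculus

section FrequencySets

variable {d : ℕ} (Su Sn : Set (EuclideanSpace ℝ (Fin d)))

/-- `Kset` without the exceptional case `n₁ = 1`. -/
def Kgen (n₁ n₂ : ℕ) : Set (EuclideanSpace ℝ (Fin d)) :=
  ∑ _j : Fin n₁, (Su ∪ -Su) + ∑ _j : Fin n₂, Sn

lemma Kset_eq_Kgen {n₁ : ℕ} (h : n₁ ≠ 1) (n₂ : ℕ) : Kset Su Sn n₁ n₂ = Kgen Su Sn n₁ n₂ := by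
  ext v
  simp only [Kset, if_neg h, Kgen, Set.mem_add, Set.mem_fintype_sum, mem_ofPred_eq]
  constructor
  · rintro ⟨a, b, ha, hb, rfl⟩
    exact ⟨_, ⟨a, ha, rfl⟩, _, ⟨b, hb, rfl⟩, rfl⟩
  · rintro ⟨_, ⟨a, ha, rfl⟩, _, ⟨b, hb, rfl⟩, rfl⟩
    exact ⟨a, b, ha, hb, rfl⟩

lemma Kset_one_eq (n₂ : ℕ) : Kset Su Sn 1 n₂ = Su + ∑ _j : Fin n₂, Sn := by
  ext v
  simp only [Kset, Set.mem_add, Set.mem_fintype_sum]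
  constructor
  · rintro ⟨a, ha, b, hb, rfl⟩
    exact ⟨a, ha, _, ⟨b, hb, rfl⟩, rfl⟩
  · rintro ⟨a, ha, _, ⟨b, hb, rfl⟩, rfl⟩
    exact ⟨a, ha, b, hb, rfl⟩

lemma Kset_subset_Kgen (n₁ n₂ : ℕ) : Kset Su Sn n₁ n₂ ⊆ Kgen Su Sn n₁ n₂ := by
  rcases eq_or_ne n₁ 1 with rfl | h
  · rw [Kset_one_eq, Kgen, Fin.sum_univ_one]
    exact add_subset_add_right subset_union_left
  · exact (Kset_eq_Kgen Su Sn h n₂).subset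

lemma Kgen_add_Kgen (n₁ n₂ m₁ m₂ : ℕ) :
    Kgen Su Sn n₁ n₂ + Kgen Su Sn m₁ m₂ = Kgen Su Sn (n₁ + m₁) (n₂ + m₂) := by
  simp only [Kgen, Fin.sum_univ_add]
  exact add_add_add_comm ..

variable {Sn} in
lemma neg_Kgen (hSn : -Sn = Sn) (n₁ n₂ : ℕ) : -Kgen Su Sn n₁ n₂ = Kgen Su Sn n₁ n₂ := by
  simp only [Kgen, neg_add, ← Finset.sum_neg_distrib, union_neg, neg_neg, hSn, union_comm]

/-- If `n₁ + m₁ = 1` then `m₁ = 0`, so only wave frequencies are added to `Kset 1 n₂`. -/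
lemma Kset_add_Kset_subset {n₁ m₁ : ℕ} (hm₁ : m₁ ≠ 1) (n₂ m₂ : ℕ) :
    Kset Su Sn n₁ n₂ + Kset Su Sn m₁ m₂ ⊆ Kset Su Sn (n₁ + m₁) (n₂ + m₂) := by
  rcases eq_or_ne (n₁ + m₁) 1 with h | h
  · obtain ⟨rfl, rfl⟩ : n₁ = 1 ∧ m₁ = 0 := by omega
    rw [Kset_eq_Kgen Su Sn hm₁, Kset_one_eq, Kset_one_eq, Kgen, Fin.sum_univ_zero, zero_add,
      add_assoc, Fin.sum_univ_add (a := n₂) (b := m₂) (fun _ => Sn)]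
  · rw [Kset_eq_Kgen Su Sn h, ← Kgen_add_Kgen]
    exact add_subset_add (Kset_subset_Kgen ..) (Kset_subset_Kgen ..)

end FrequencySets

section Parity

variable {d : ℕ} {Su Sn : Set (EuclideanSpace ℝ (Fin d))}

lemma mem_SigOdd {n : ℕ} {x : EuclideanSpace ℝ (Fin d)} :
    x ∈ SigOdd Su Sn n ↔ ∃ n₁ n₂, n₁ + n₂ = n ∧ Odd n₁ ∧ x ∈ Kset Su Sn n₁ n₂ := by
  simp [SigOdd, and_assoc]

lemma mem_SigEven {n : ℕ} {x : EuclideanSpace ℝ (Fin d)} :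
    x ∈ SigEven Su Sn n ↔ ∃ n₁ n₂, n₁ + n₂ = n ∧ Even n₁ ∧ x ∈ Kset Su Sn n₁ n₂ := by
  simp [SigEven, and_assoc]

variable (Su Sn) in
lemma subset_SigOdd_one : Su ⊆ SigOdd Su Sn 1 := fun a ha =>
  mem_SigOdd.mpr ⟨1, 0, rfl, odd_one, by simpa [Kset_one_eq] using ha⟩

variable (Su Sn) in
lemma subset_SigEven_one : Sn ⊆ SigEven Su Sn 1 := fun b hb =>
  mem_SigEven.mpr ⟨0, 1, rfl, Even.zero, by simpa [Kset_eq_Kgen, Kgen] using hb⟩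

lemma SigOdd_add_SigEven_subset (k m : ℕ) :
    SigOdd Su Sn k + SigEven Su Sn m ⊆ SigOdd Su Sn (k + m) := by
  rintro _ ⟨x, hx, y, hy, rfl⟩
  obtain ⟨k₁, k₂, rfl, hk₁, hx⟩ := mem_SigOdd.mp hx
  obtain ⟨m₁, m₂, rfl, hm₁, hy⟩ := mem_SigEven.mp hy
  have hm₁' : m₁ ≠ 1 := by rintro rfl; exact Nat.not_even_one hm₁
  exact mem_SigOdd.mpr ⟨k₁ + m₁, k₂ + m₂, by ring, hk₁.add_even hm₁,
    Kset_add_Kset_subset Su Sn hm₁' k₂ m₂ (add_mem_add hx hy)⟩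

lemma neg_SigEven (hSn : -Sn = Sn) (m : ℕ) : -SigEven Su Sn m = SigEven Su Sn m := by
  have h : -SigEven Su Sn m ⊆ SigEven Su Sn m := by
    intro x hx
    obtain ⟨m₁, m₂, rfl, hm₁, hx⟩ := mem_SigEven.mp hx
    have hm₁' : m₁ ≠ 1 := by rintro rfl; exact Nat.not_even_one hm₁
    rw [Kset_eq_Kgen Su Sn hm₁'] at hx
    refine mem_SigEven.mpr ⟨m₁, m₂, rfl, hm₁, ?_⟩
    rw [Kset_eq_Kgen Su Sn hm₁', ← neg_Kgen Su hSn]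
    exact hx
  exact h.antisymm (neg_subset.mp h)

lemma SigOdd_sub_SigOdd_subset (hSn : -Sn = Sn) (k m : ℕ) :
    SigOdd Su Sn k - SigOdd Su Sn m ⊆ SigEven Su Sn (k + m) := by
  rintro _ ⟨x, hx, y, hy, rfl⟩
  obtain ⟨k₁, k₂, rfl, hk₁, hx⟩ := mem_SigOdd.mp hx
  obtain ⟨m₁, m₂, rfl, hm₁, hy⟩ := mem_SigOdd.mp hy
  have h : k₁ + m₁ ≠ 1 := by
    obtain ⟨i, rfl⟩ := hk₁; obtain ⟨j, rfl⟩ := hm₁; omega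
  refine mem_SigEven.mpr ⟨k₁ + m₁, k₂ + m₂, by ring, hk₁.add_odd hm₁, ?_⟩
  change x - y ∈ _
  rw [Kset_eq_Kgen Su Sn h, ← Kgen_add_Kgen, ← neg_Kgen Su hSn m₁, sub_eq_add_neg]
  exact add_mem_add (Kset_subset_Kgen Su Sn _ _ hx) (neg_mem_neg.mpr (Kset_subset_Kgen Su Sn _ _ hy))

end Parity

section Dilates

variable {E : Type*} [AddCommGroup E] [Module ℝ E] {Q : Set E}

lemma add_smul_add_add_smul_subset (hQ : Convex ℝ Q) {A B C : Set E} (h : A + B ⊆ C) {r s : ℝ}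
    (hr : 0 ≤ r) (hs : 0 ≤ s) : (A + r • Q) + (B + s • Q) ⊆ C + (r + s) • Q := by
  rw [hQ.add_smul hr hs, add_add_add_comm]
  exact add_subset_add_right h

lemma neg_add_smul_of_neg_eq (hQ : -Q = Q) (A : Set E) (r : ℝ) :
    -(A + r • Q) = -A + r • Q := by
  rw [neg_add, ← smul_set_neg, hQ]

end Dilates

section Regions

variable {d : ℕ} {Su Sn Q : Set (EuclideanSpace ℝ (Fin d))}

lemma SigOdd_add_smul_add_SigEven_add_smul_subset (hQ : Convex ℝ Q) {k m n : ℕ}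
    (h : k + m = n) :
    (SigOdd Su Sn k + (k : ℝ) • Q) + (SigEven Su Sn m + (m : ℝ) • Q) ⊆
      SigOdd Su Sn n + (n : ℝ) • Q := by
  subst h
  push_cast
  exact add_smul_add_add_smul_subset hQ (SigOdd_add_SigEven_subset k m) k.cast_nonneg
    m.cast_nonneg

lemma neg_SigEven_add_smul (hQ : -Q = Q) (hSn : -Sn = Sn) (m : ℕ) :
    -(SigEven Su Sn m + (m : ℝ) • Q) = SigEven Su Sn m + (m : ℝ) • Q := by
  rw [neg_add_smul_of_neg_eq hQ, neg_SigEven hSn]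

lemma SigOdd_add_smul_sub_SigOdd_add_smul_subset (hQ : Convex ℝ Q) (hQsymm : -Q = Q)
    (hSn : -Sn = Sn) {k m n : ℕ} (h : k + m = n) :
    (SigOdd Su Sn k + (k : ℝ) • Q) + -(SigOdd Su Sn m + (m : ℝ) • Q) ⊆
      SigEven Su Sn n + (n : ℝ) • Q := by
  subst h
  rw [neg_add_smul_of_neg_eq hQsymm]
  push_cast
  exact add_smul_add_add_smul_subset hQ
    (by simpa only [sub_eq_add_neg] using SigOdd_sub_SigOdd_subset hSn k m) k.cast_nonneg
    m.cast_nonneg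

end Regions

section Iterates

variable {E : Type*} [AddCommGroup E] {X Y Z : Set E} {ξ : E}

lemma schrodinger_integrand_eq_zero {f g : E → ℂ} (hf : support f ⊆ X) (hg : support g ⊆ Y)
    (hY : -Y = Y) (hZ : X + Y ⊆ Z) (hξ : ξ ∉ Z) (η : E) :
    f η * ((g (ξ - η) + starRingEnd ℂ (g (-(ξ - η)))) / 2) = 0 := by
  have hsymm : support (fun x => (g x + starRingEnd ℂ (g (-x))) / 2) ⊆ Y := by
    refine (support_conj_symmetrization_subset g).trans ?_
    rw [union_subset_iff, neg_subset, hY]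
    exact ⟨hg, hg⟩
  exact mul_apply_sub_eq_zero_of_notMem_add hf hsymm (fun h => hξ (hZ h)) η

lemma wave_integrand_eq_zero {f g : E → ℂ} (hf : support f ⊆ X) (hg : support g ⊆ Y)
    (hZ : X + -Y ⊆ Z) (hξ : ξ ∉ Z) (η : E) : f η * starRingEnd ℂ (g (η - ξ)) = 0 := by
  have hg' : support (fun x => starRingEnd ℂ (g (-x))) ⊆ -Y := by
    rw [support_conj_comp_neg]
    exact neg_subset_neg.mpr hg
  simpa only [neg_sub] using mul_apply_sub_eq_zero_of_notMem_add hf hg' (fun h => hξ (hZ h)) η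

lemma neg_I_mul_sum_integral_eq_zero {α : Type*} [MeasurableSpace α] {μ : Measure α} {n : ℕ}
    {t : ℝ} (c : ℝ → ℂ) {h : ℕ → ℝ → α → ℂ} (hh : ∀ k ∈ Finset.Ico 1 n, ∀ σ η, h k σ η = 0) :
    -Complex.I * ∑ k ∈ Finset.Ico 1 n, ∫ σ in (0 : ℝ)..t, c σ * ∫ η, h k σ η ∂μ = 0 := by
  simp +contextual [hh]

end Iterates

theorem IsPicardIterates.support_subset {d : ℕ} {u₀ n₀ : EuclideanSpace ℝ (Fin d) → ℂ}
    {F G : ℕ → ℝ → EuclideanSpace ℝ (Fin d) → ℂ} (hFG : IsPicardIterates u₀ n₀ F G)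
    {Su Sn Q : Set (EuclideanSpace ℝ (Fin d))} (hQ : Convex ℝ Q) (hQsymm : -Q = Q)
    (hSn : -Sn = Sn) (hu₀ : support u₀ ⊆ Su + Q) (hn₀ : support n₀ ⊆ Sn + Q) {n : ℕ}
    (hn : 1 ≤ n) (t : ℝ) :
    support (F n t) ⊆ SigOdd Su Sn n + (n : ℝ) • Q ∧
      support (G n t) ⊆ SigEven Su Sn n + (n : ℝ) • Q := by
  obtain ⟨hF₁, hG₁, hF, hG⟩ := hFG
  induction n using Nat.strong_induction_on generalizing t with
  | _ n ih =>
  rcases hn.eq_or_lt with rfl | hn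
  · rw [show F 1 t = _ from funext (hF₁ t), show G 1 t = _ from funext (hG₁ t), Nat.cast_one,
      one_smul]
    exact ⟨(support_mul_subset_right _ _).trans
        (hu₀.trans (add_subset_add_right (subset_SigOdd_one Su Sn))),
      (support_mul_subset_right _ _).trans
        (hn₀.trans (add_subset_add_right (subset_SigEven_one Su Sn)))⟩
  constructor <;> rw [support_subset_iff'] <;> intro ξ hξ
  · rw [hF n hn t ξ]
    refine neg_I_mul_sum_integral_eq_zero _ fun k hk σ η => ?_
    obtain ⟨hk₁, hkn⟩ := Finset.mem_Ico.mp hk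
    exact schrodinger_integrand_eq_zero (ih k hkn hk₁ σ).1 (ih (n - k) (by omega) (by omega) σ).2
      (neg_SigEven_add_smul hQsymm hSn _)
      (SigOdd_add_smul_add_SigEven_add_smul_subset hQ (by omega)) hξ η
  · rw [hG n hn t ξ]
    refine neg_I_mul_sum_integral_eq_zero _ fun k hk σ η => ?_
    obtain ⟨hk₁, hkn⟩ := Finset.mem_Ico.mp hk
    exact wave_integrand_eq_zero (ih k hkn hk₁ σ).1 (ih (n - k) (by omega) (by omega) σ).1
      (SigOdd_add_smul_sub_SigOdd_add_smul_subset hQ hQsymm hSn (by omega)) hξ η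

theorem statement_4 (d : ℕ)
    (Q : Set (EuclideanSpace ℝ (Fin d)))
    (hQconv : Convex ℝ Q)
    (hQsymm : Q = -Q)
    (Su Sn : Set (EuclideanSpace ℝ (Fin d)))
    (hSnsymm : -Sn = Sn)
    (u₀ n₀ : EuclideanSpace ℝ (Fin d) → ℂ)
    (hu₀supp : ∀ ξ, ξ ∉ (⋃ η ∈ Su, {ζ : EuclideanSpace ℝ (Fin d) | ζ - η ∈ Q}) → u₀ ξ = 0)
    (hn₀supp : ∀ ξ, ξ ∉ (⋃ η ∈ Sn, {ζ : EuclideanSpace ℝ (Fin d) | ζ - η ∈ Q}) → n₀ ξ = 0)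
    (F G : ℕ → ℝ → EuclideanSpace ℝ (Fin d) → ℂ)
    (hFG : IsPicardIterates u₀ n₀ F G) :
    ∀ n : ℕ, 1 ≤ n → ∀ t : ℝ, 0 ≤ t →
      (∀ ξ, ξ ∉ (⋃ η ∈ SigOdd Su Sn n, {ζ : EuclideanSpace ℝ (Fin d) | ζ - η ∈ (n : ℝ) • Q}) →
        F n t ξ = 0) ∧
      (∀ ξ, ξ ∉ (⋃ η ∈ SigEven Su Sn n, {ζ : EuclideanSpace ℝ (Fin d) | ζ - η ∈ (n : ℝ) • Q}) →
        G n t ξ = 0) := by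
  intro n hn t _
  simp only [biUnion_setOf_sub_mem_eq_add, ← support_subset_iff'] at hu₀supp hn₀supp ⊢
  exact hFG.support_subset hQconv hQsymm.symm hSnsymm hu₀supp hn₀supp hn t
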